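/- Let s = (s_i)_{i≥0} be a non-decreasing sequence of positive integers with s_0 = 1, and let S be a step set that contains every horizontal step (a,0) with a ≥ 1 and satisfies the slope condition for s, i.e. for every (a,b) ∈ S with b > 0, every i ≥ 0 and every j with 1 ≤ j ≤ b one has b·(s_{i+j} − s_i + 1) > j·a. For m ≥ 0 let p_m be the number of S-paths from (0,0) to (s_m − 1, m) with boundary s, and let d_m be the number of S-paths from (0,0) to (s_m − 1, m) with boundary s whose last step (a,b) has b > 0 (in particular d_0 = 0). Then for every n ≥ 1, in ℤ: Σ_{j=0}^{s_n−1} a_{j,n} = p_n + Σ_{m=0}^{n−1} (2p_m − d_m) · Σ_{j=0}^{s_n−s_m−1} a_{j,n−m}. -/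

import Mathlib

/-
Split an `S`-path to `(x, n)` at its first node outside the boundary. A step of positive height
starting inside the region `{(x, i) | x < s i}` stays inside it (slope condition with `j = b`),
so the exit step is horizontal: the path is a bounded path `q` ending on some row `m ≤ n`, a
horizontal step to a column `u ≥ s m`, and an arbitrary `S`-path translated to start at `(u, m)`.
The exit is unique, so with `b` counting bounded paths and `g m` the bounded paths ending on
row `m`, `a (x, n) = b (x, n) + ∑_{m ≤ n} g m * ∑_{j ≤ x - s m} a (j, n - m)`;
take `x = s n - 1`. Sorting the bounded paths to `(s m - 1, m)` by their last step gives
`p m = d m + (g m - p m)` for `m ≥ 1`, while `g 0 = p 0 = 1` and `d 0 = 0`; the surplus `1`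
at `m = 0` accounts for `∑_{j < s n} a (j, n) - a (s n - 1, n)`.
-/

/-- x-coordinate of the `j`-th node of the path `p` (partial sum of first coordinates). -/
def xPart (p : List (ℕ × ℕ)) (j : ℕ) : ℕ := ((p.take j).map Prod.fst).sum

/-- y-coordinate of the `j`-th node of the path `p` (partial sum of second coordinates). -/
def yPart (p : List (ℕ × ℕ)) (j : ℕ) : ℕ := ((p.take j).map Prod.snd).sum

/-- `p` is an `S`-path from `(0,0)` to `(n,m)`. -/
def IsPath (S : Set (ℕ × ℕ)) (n m : ℕ) (p : List (ℕ × ℕ)) : Prop :=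
  (∀ st ∈ p, st ∈ S) ∧ xPart p p.length = n ∧ yPart p p.length = m

/-- `p` has (right) boundary `s`: every node `(x, i)` satisfies `x < s i`. -/
def HasBoundary (s : ℕ → ℕ) (p : List (ℕ × ℕ)) : Prop :=
  ∀ j ≤ p.length, xPart p j < s (yPart p j)

/-- The number of `S`-paths from `(0,0)` to `(n,m)`. -/
noncomputable def aCount (S : Set (ℕ × ℕ)) (n m : ℕ) : ℕ :=
  Set.ncard {p : List (ℕ × ℕ) | IsPath S n m p}

lemma xPart_eq (p : List (ℕ × ℕ)) (j : ℕ) : xPart p j = (p.take j).sum.1 :=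
  (map_list_sum (AddMonoidHom.fst ℕ ℕ) _).symm

lemma yPart_eq (p : List (ℕ × ℕ)) (j : ℕ) : yPart p j = (p.take j).sum.2 :=
  (map_list_sum (AddMonoidHom.snd ℕ ℕ) _).symm

lemma isPath_iff {S : Set (ℕ × ℕ)} {n m : ℕ} {p : List (ℕ × ℕ)} :
    IsPath S n m p ↔ (∀ a ∈ p, a ∈ S) ∧ p.sum = (n, m) := by
  simp [IsPath, xPart_eq, yPart_eq, Prod.ext_iff]

section Boundary

variable {s : ℕ → ℕ} {p q : List (ℕ × ℕ)} {a : ℕ × ℕ}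

lemma hasBoundary_iff : HasBoundary s p ↔ ∀ q, q <+: p → q.sum.1 < s q.sum.2 := by
  refine ⟨fun h q hq => ?_, fun h j _ => ?_⟩
  · have := h q.length hq.length_le
    rw [List.prefix_iff_eq_take] at hq
    rwa [xPart_eq, yPart_eq, ← hq] at this
  · rw [xPart_eq, yPart_eq]
    exact h _ (List.take_prefix j p)

lemma HasBoundary.of_prefix (h : HasBoundary s p) (hq : q <+: p) : HasBoundary s q :=
  hasBoundary_iff.2 fun _ hr => hasBoundary_iff.1 h _ (hr.trans hq)

lemma HasBoundary.sum_lt (h : HasBoundary s p) : p.sum.1 < s p.sum.2 :=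
  hasBoundary_iff.1 h p (List.prefix_refl p)

lemma hasBoundary_nil : HasBoundary s [] ↔ 0 < s 0 := by
  simp [hasBoundary_iff]

lemma hasBoundary_concat :
    HasBoundary s (p ++ [a]) ↔ HasBoundary s p ∧ p.sum.1 + a.1 < s (p.sum.2 + a.2) := by
  simp [hasBoundary_iff (p := p ++ [a]), List.prefix_concat_iff, or_imp, forall_and,
    hasBoundary_iff (p := p), and_comm]

lemma exists_exit (h0 : 0 < s 0) {p : List (ℕ × ℕ)} (hp : ¬HasBoundary s p) :
    ∃ q a r, p = q ++ a :: r ∧ HasBoundary s q ∧ ¬HasBoundary s (q ++ [a]) := by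
  induction p using List.reverseRecOn with
  | nil => exact absurd (hasBoundary_nil.2 h0) hp
  | append_singleton p a ih =>
    by_cases hb : HasBoundary s p
    · exact ⟨p, a, [], rfl, hb, hp⟩
    · obtain ⟨q, b, r, rfl, hq, hqb⟩ := ih hb
      exact ⟨q, b, r ++ [a], by simp, hq, hqb⟩

lemma exit_unique {q q' r r' : List (ℕ × ℕ)} {a a' : ℕ × ℕ}
    (h : q ++ a :: r = q' ++ a' :: r') (hq : HasBoundary s q) (hq' : HasBoundary s q')
    (hqa : ¬HasBoundary s (q ++ [a])) (hqa' : ¬HasBoundary s (q' ++ [a'])) :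
    q = q' ∧ r = r' := by
  have length_le : ∀ {q q' r r' : List (ℕ × ℕ)} {a a' : ℕ × ℕ},
      q ++ a :: r = q' ++ a' :: r' → HasBoundary s q' → ¬HasBoundary s (q ++ [a]) →
        q'.length ≤ q.length := by
    intro q q' r r' a a' h hq' hqa
    by_contra! hlt
    refine hqa (hq'.of_prefix (List.prefix_of_prefix_length_le ⟨r, ?_⟩ ⟨a' :: r', h.symm⟩ ?_))
    · simp [h]
    · simpa using hlt
  obtain ⟨rfl, h'⟩ :=
    List.append_inj h (le_antisymm (length_le h.symm hq hqa') (length_le h hq' hqa))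
  exact ⟨rfl, (List.cons.inj h').2⟩

lemma not_hasBoundary_concat_horizontal {q : List (ℕ × ℕ)} {u : ℕ}
    (hq : q.sum.1 ≤ u) (hu : s q.sum.2 ≤ u) : ¬HasBoundary s (q ++ [(u - q.sum.1, 0)]) := by
  rw [hasBoundary_concat, add_zero]
  omega

end Boundary

def stepLists (S : Set (ℕ × ℕ)) : Set (List (ℕ × ℕ)) := {p | ∀ a ∈ p, a ∈ S}

def boundedLists (s : ℕ → ℕ) (S : Set (ℕ × ℕ)) : Set (List (ℕ × ℕ)) :=
  {p ∈ stepLists S | HasBoundary s p}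

def endingAt (A : Set (List (ℕ × ℕ))) (v : ℕ × ℕ) : Set (List (ℕ × ℕ)) :=
  {p ∈ A | p.sum = v}

def endingBefore (A : Set (List (ℕ × ℕ))) (K r : ℕ) : Set (List (ℕ × ℕ)) :=
  {p ∈ A | p.sum.1 < K ∧ p.sum.2 = r}

def EndsRising (p : List (ℕ × ℕ)) : Prop := ∃ a, p.getLast? = some a ∧ 0 < a.2

lemma setOf_isPath_eq (S : Set (ℕ × ℕ)) (x y : ℕ) :
    {p | IsPath S x y p} = endingAt (stepLists S) (x, y) := by
  ext p
  simp [isPath_iff, endingAt, stepLists]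

lemma setOf_isPath_hasBoundary_eq (s : ℕ → ℕ) (S : Set (ℕ × ℕ)) (x y : ℕ) :
    {p | IsPath S x y p ∧ HasBoundary s p} = endingAt (boundedLists s S) (x, y) := by
  ext p
  simp [isPath_iff, endingAt, boundedLists, stepLists, and_right_comm]

lemma setOf_isPath_hasBoundary_endsRising_eq (s : ℕ → ℕ) (S : Set (ℕ × ℕ)) (x y : ℕ) :
    {p | IsPath S x y p ∧ HasBoundary s p ∧ ∃ a, p.getLast? = some a ∧ 0 < a.2} =
      endingAt (boundedLists s S) (x, y) ∩ {p | EndsRising p} := by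
  rw [← setOf_isPath_hasBoundary_eq]
  ext p
  simp [EndsRising, and_assoc]

lemma length_le_sum_fst_add_sum_snd {p : List (ℕ × ℕ)} (h : (0, 0) ∉ p) :
    p.length ≤ p.sum.1 + p.sum.2 := by
  induction p with
  | nil => simp
  | cons a t ih =>
    obtain ⟨ha, ht⟩ : a ≠ (0, 0) ∧ (0, 0) ∉ t := by simpa [eq_comm] using h
    have : a.1 ≠ 0 ∨ a.2 ≠ 0 := by contrapose! ha; exact Prod.ext ha.1 ha.2
    simp only [List.length_cons, List.sum_cons, Prod.fst_add, Prod.snd_add]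
    have := ih ht
    omega

lemma finite_endingAt_stepLists {S : Set (ℕ × ℕ)} (h00 : (0, 0) ∉ S) (v : ℕ × ℕ) :
    (endingAt (stepLists S) v).Finite := by
  have := (Set.finite_Iic v).to_subtype
  refine ((List.finite_length_le (Set.Iic v) (v.1 + v.2)).image (List.map Subtype.val)).subset ?_
  rintro p ⟨hS, rfl⟩
  refine ⟨p.attach.map fun a => ⟨a.1, List.le_sum_of_mem a.2⟩, ?_,
    by simp [Function.comp_def, List.attach_map_subtype_val]⟩
  simpa using length_le_sum_fst_add_sum_snd fun h => h00 (hS _ h)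

lemma endingBefore_eq_biUnion (A : Set (List (ℕ × ℕ))) (K r : ℕ) :
    endingBefore A K r = ⋃ j ∈ Finset.range K, endingAt A (j, r) := by
  ext p
  simp +contextual [endingBefore, endingAt, Prod.ext_iff, and_assoc]

section Counting

variable {A : Set (List (ℕ × ℕ))}

lemma finite_endingBefore (hA : ∀ v, (endingAt A v).Finite) (K r : ℕ) :
    (endingBefore A K r).Finite := by
  rw [endingBefore_eq_biUnion]
  exact (Finset.range K).finite_toSet.biUnion fun j _ => hA (j, r)

lemma ncard_endingBefore (hA : ∀ v, (endingAt A v).Finite) (K r : ℕ) :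
    (endingBefore A K r).ncard = ∑ j ∈ Finset.range K, (endingAt A (j, r)).ncard := by
  rw [endingBefore_eq_biUnion, ← Finset.set_biUnion_coe,
    (Finset.range K).finite_toSet.ncard_biUnion (fun j _ => hA (j, r)),
    finsum_mem_coe_finset]
  intro i _ j _ hij
  exact Set.disjoint_left.2 fun p hi hj => hij (by simpa using hi.2.symm.trans hj.2)

lemma ncard_endingBefore_succ (hA : ∀ v, (endingAt A v).Finite) (K r : ℕ) :
    (endingBefore A (K + 1) r).ncard =
      (endingBefore A K r).ncard + (endingAt A (K, r)).ncard := by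
  rw [ncard_endingBefore hA, ncard_endingBefore hA, Finset.sum_range_succ]

end Counting

lemma ncard_endingBefore_stepLists {S : Set (ℕ × ℕ)} (h00 : (0, 0) ∉ S) (K r : ℕ) :
    (endingBefore (stepLists S) K r).ncard = ∑ j ∈ Finset.range K, aCount S j r := by
  simp only [ncard_endingBefore (finite_endingAt_stepLists h00), aCount, setOf_isPath_eq]

section Paths

variable {s : ℕ → ℕ} {S : Set (ℕ × ℕ)}

lemma finite_endingAt_boundedLists (h00 : (0, 0) ∉ S) (v : ℕ × ℕ) :
    (endingAt (boundedLists s S) v).Finite :=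
  (finite_endingAt_stepLists h00 v).subset fun _ hp => ⟨hp.1.1, hp.2⟩

def RisingStepsStayInside (s : ℕ → ℕ) (S : Set (ℕ × ℕ)) : Prop :=
  ∀ a ∈ S, 0 < a.2 → ∀ v : ℕ × ℕ, v.1 < s v.2 → v.1 + a.1 < s (v.2 + a.2)

lemma risingStepsStayInside_of_slope (hmono : Monotone s)
    (hslope : ∀ a b : ℕ, (a, b) ∈ S → 0 < b →
      ∀ i j : ℕ, 1 ≤ j → j ≤ b → j * a < b * (s (i + j) - s i + 1)) :
    RisingStepsStayInside s S := by
  rintro ⟨a, b⟩ hab hb ⟨x, i⟩ hx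
  have := hmono (Nat.le_add_right i b)
  have : a < s (i + b) - s i + 1 :=
    lt_of_mul_lt_mul_left (hslope a b hab hb i b hb le_rfl) (Nat.zero_le b)
  dsimp only at hx ⊢
  omega

lemma RisingStepsStayInside.hasBoundary_concat (h : RisingStepsStayInside s S)
    {q : List (ℕ × ℕ)} {a : ℕ × ℕ} (hq : HasBoundary s q) (ha : a ∈ S) (ha₂ : 0 < a.2) :
    HasBoundary s (q ++ [a]) :=
  _root_.hasBoundary_concat.2 ⟨hq, h a ha ha₂ _ hq.sum_lt⟩

/-- The horizontal middle step is chosen so that the spliced path ends in column `x`. -/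
def splice (x : ℕ) (qr : List (ℕ × ℕ) × List (ℕ × ℕ)) : List (ℕ × ℕ) :=
  qr.1 ++ (x - qr.2.sum.1 - qr.1.sum.1, 0) :: qr.2

lemma splice_inj {x : ℕ} {q r q' r' : List (ℕ × ℕ)} (hq : HasBoundary s q)
    (hq' : HasBoundary s q') (hqr : s q.sum.2 + r.sum.1 ≤ x) (hqr' : s q'.sum.2 + r'.sum.1 ≤ x)
    (h : splice x (q, r) = splice x (q', r')) : q = q' ∧ r = r' := by
  have := hq.sum_lt
  have := hq'.sum_lt
  exact exit_unique h hq hq'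
    (not_hasBoundary_concat_horizontal (u := x - r.sum.1) (by omega) (by omega))
    (not_hasBoundary_concat_horizontal (u := x - r'.sum.1) (by omega) (by omega))

lemma splice_mem (hhoriz : ∀ a : ℕ, 1 ≤ a → (a, 0) ∈ S) {x n m : ℕ} (hmn : m ≤ n)
    {q r : List (ℕ × ℕ)} (hq : q ∈ endingBefore (boundedLists s S) (s m) m)
    (hr : r ∈ endingBefore (stepLists S) (x + 1 - s m) (n - m)) :
    splice x (q, r) ∈ endingAt (stepLists S) (x, n) \ boundedLists s S := by
  obtain ⟨⟨hqS, hqB⟩, hq₁, rfl⟩ := hq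
  obtain ⟨hrS, hr₁, hr₂⟩ := hr
  refine ⟨⟨fun a ha => ?_, ?_⟩, fun hB => ?_⟩
  · simp only [splice, List.mem_append, List.mem_cons] at ha
    rcases ha with ha | rfl | ha
    exacts [hqS a ha, hhoriz _ (by omega), hrS a ha]
  · simp only [splice, List.sum_append, List.sum_cons, Prod.ext_iff, Prod.fst_add, Prod.snd_add]
    omega
  · have hprefix : q ++ [(x - r.sum.1 - q.sum.1, 0)] <+: splice x (q, r) :=
      ⟨r, by simp [splice]⟩
    exact not_hasBoundary_concat_horizontal (by omega) (by omega) (hB.2.of_prefix hprefix)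

lemma exists_splice (h0 : 0 < s 0) (hup : RisingStepsStayInside s S) {x n : ℕ}
    {p : List (ℕ × ℕ)} (hp : p ∈ endingAt (stepLists S) (x, n) \ boundedLists s S) :
    ∃ m ∈ Finset.range (n + 1), ∃ qr ∈ endingBefore (boundedLists s S) (s m) m ×ˢ
      endingBefore (stepLists S) (x + 1 - s m) (n - m), splice x qr = p := by
  obtain ⟨⟨hS, hsum⟩, hpB⟩ := hp
  obtain ⟨q, ⟨a₁, a₂⟩, r, rfl, hq, hqa⟩ := exists_exit h0 fun hB => hpB ⟨hS, hB⟩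
  obtain rfl : a₂ = 0 := by
    by_contra ha₂
    exact hqa (hup.hasBoundary_concat hq (hS _ (by simp)) (Nat.pos_of_ne_zero ha₂))
  have hexit : s q.sum.2 ≤ q.sum.1 + a₁ := by simpa [hasBoundary_concat, hq] using hqa
  simp only [List.sum_append, List.sum_cons, Prod.ext_iff, Prod.fst_add, Prod.snd_add] at hsum
  have hq' : q ∈ boundedLists s S := ⟨fun b hb => hS b (by simp [hb]), hq⟩
  have hr : r ∈ stepLists S := fun b hb => hS b (by simp [hb])
  refine ⟨q.sum.2, Finset.mem_range.2 (by omega), (q, r), ⟨⟨hq', hq.sum_lt, rfl⟩, hr, ?_, ?_⟩, ?_⟩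
  · dsimp only; omega
  · dsimp only; omega
  · simp only [splice]
    congr 3
    omega

lemma ncard_exits (h00 : (0, 0) ∉ S) (h0 : 0 < s 0) (hhoriz : ∀ a : ℕ, 1 ≤ a → (a, 0) ∈ S)
    (hup : RisingStepsStayInside s S) (x n : ℕ) :
    (endingAt (stepLists S) (x, n) \ boundedLists s S).ncard =
      ∑ m ∈ Finset.range (n + 1), (endingBefore (boundedLists s S) (s m) m).ncard *
        (endingBefore (stepLists S) (x + 1 - s m) (n - m)).ncard := by
  set F : ℕ → Set (List (ℕ × ℕ) × List (ℕ × ℕ)) := fun m =>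
    endingBefore (boundedLists s S) (s m) m ×ˢ endingBefore (stepLists S) (x + 1 - s m) (n - m)
  have hF : ∀ m, ∀ qr ∈ F m, HasBoundary s qr.1 ∧ qr.1.sum.2 = m ∧ s m + qr.2.sum.1 ≤ x := by
    rintro m ⟨q, r⟩ ⟨⟨⟨_, hq⟩, _, hq₂⟩, _, hr₁, _⟩
    exact ⟨hq, hq₂, by omega⟩
  have hinj : ∀ m m', ∀ qr ∈ F m, ∀ qr' ∈ F m', splice x qr = splice x qr' → qr = qr' := by
    rintro m m' ⟨q, r⟩ hqr ⟨q', r'⟩ hqr' h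
    obtain ⟨hq, rfl, hqr⟩ := hF m _ hqr
    obtain ⟨hq', rfl, hqr'⟩ := hF m' _ hqr'
    obtain ⟨rfl, rfl⟩ := splice_inj hq hq' hqr hqr' h
    rfl
  have hexits : endingAt (stepLists S) (x, n) \ boundedLists s S =
      ⋃ m ∈ (Finset.range (n + 1) : Set ℕ), splice x '' F m := by
    ext p
    simp only [Set.mem_iUnion, Set.mem_image, Finset.mem_coe, exists_prop]
    refine ⟨exists_splice h0 hup, ?_⟩
    rintro ⟨m, hm, ⟨q, r⟩, ⟨hq, hr⟩, rfl⟩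
    exact splice_mem hhoriz (Nat.lt_succ_iff.1 (Finset.mem_range.1 hm)) hq hr
  have hfin : ∀ m, (F m).Finite := fun m =>
    (finite_endingBefore (finite_endingAt_boundedLists h00) _ _).prod
      (finite_endingBefore (finite_endingAt_stepLists h00) _ _)
  rw [hexits, (Finset.range (n + 1)).finite_toSet.ncard_biUnion (fun m _ => (hfin m).image _),
    finsum_mem_coe_finset]
  · refine Finset.sum_congr rfl fun m _ => ?_
    rw [Set.InjOn.ncard_image fun qr hqr qr' hqr' => hinj m m qr hqr qr' hqr', Set.ncard_prod]
  · intro m _ m' _ hmm'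
    refine Set.disjoint_left.2 ?_
    rintro p ⟨qr, hqr, rfl⟩ ⟨qr', hqr', h⟩
    obtain rfl := hinj m' m qr' hqr' qr hqr h
    exact hmm' ((hF m _ hqr).2.1.symm.trans (hF m' _ hqr').2.1)

lemma ncard_endingAt_stepLists (h00 : (0, 0) ∉ S) (h0 : 0 < s 0)
    (hhoriz : ∀ a : ℕ, 1 ≤ a → (a, 0) ∈ S) (hup : RisingStepsStayInside s S) (x n : ℕ) :
    (endingAt (stepLists S) (x, n)).ncard = (endingAt (boundedLists s S) (x, n)).ncard +
      ∑ m ∈ Finset.range (n + 1), (endingBefore (boundedLists s S) (s m) m).ncard *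
        (endingBefore (stepLists S) (x + 1 - s m) (n - m)).ncard := by
  have hbounded : endingAt (stepLists S) (x, n) ∩ boundedLists s S =
      endingAt (boundedLists s S) (x, n) := by
    ext p
    simp only [endingAt, boundedLists, Set.mem_inter_iff, Set.mem_ofPred_eq]
    tauto
  rw [← Set.ncard_inter_add_ncard_sdiff_eq_ncard _ _ (finite_endingAt_stepLists h00 _),
    hbounded, ncard_exits h00 h0 hhoriz hup]

lemma endingAt_diff_endsRising (h00 : (0, 0) ∉ S) (hhoriz : ∀ a : ℕ, 1 ≤ a → (a, 0) ∈ S)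
    {x m : ℕ} (hx : x < s m) (hm : 0 < m) :
    endingAt (boundedLists s S) (x, m) \ {p | EndsRising p} =
      (fun q => q ++ [(x - q.sum.1, 0)]) '' endingBefore (boundedLists s S) x m := by
  ext p
  constructor
  · rintro ⟨⟨⟨hS, hB⟩, hsum⟩, hnr⟩
    rcases p.eq_nil_or_concat' with rfl | ⟨q, ⟨a₁, a₂⟩, rfl⟩
    · simp only [List.sum_nil, Prod.ext_iff, Prod.fst_zero, Prod.snd_zero] at hsum
      omega
    obtain rfl : a₂ = 0 := by
      by_contra ha₂
      exact hnr ⟨(a₁, a₂), by simp, Nat.pos_of_ne_zero ha₂⟩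
    have ha₁ : a₁ ≠ 0 := by
      rintro rfl
      exact h00 (hS _ (by simp))
    simp only [List.sum_append, List.sum_singleton, Prod.ext_iff, Prod.fst_add, Prod.snd_add,
      add_zero] at hsum
    have hq : q ∈ boundedLists s S :=
      ⟨fun b hb => hS b (by simp [hb]), hB.of_prefix (List.prefix_append _ _)⟩
    refine ⟨q, ⟨hq, by omega, hsum.2⟩, ?_⟩
    simp only [List.append_cancel_left_eq, List.cons.injEq, Prod.mk.injEq, and_true]
    omega
  · rintro ⟨q, ⟨⟨hS, hB⟩, hq₁, rfl⟩, rfl⟩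
    refine ⟨⟨⟨fun a ha => ?_, hasBoundary_concat.2 ⟨hB, ?_⟩⟩, ?_⟩, ?_⟩
    · simp only [List.mem_append, List.mem_singleton] at ha
      rcases ha with ha | rfl
      exacts [hS a ha, hhoriz _ (by omega)]
    · rw [add_zero]
      omega
    · simp only [List.sum_append, List.sum_singleton, Prod.ext_iff, Prod.fst_add, Prod.snd_add]
      omega
    · rintro ⟨a, ha, ha₂⟩
      simp only [List.getLast?_concat, Option.some.injEq] at ha
      subst ha
      exact ha₂.ne rfl

lemma ncard_endingAt_boundedLists (h00 : (0, 0) ∉ S) (hhoriz : ∀ a : ℕ, 1 ≤ a → (a, 0) ∈ S)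
    {x m : ℕ} (hx : x < s m) (hm : 0 < m) :
    (endingAt (boundedLists s S) (x, m)).ncard =
      (endingAt (boundedLists s S) (x, m) ∩ {p | EndsRising p}).ncard +
        (endingBefore (boundedLists s S) x m).ncard := by
  have hinj : Set.InjOn (fun q : List (ℕ × ℕ) => q ++ [(x - q.sum.1, 0)])
      (endingBefore (boundedLists s S) x m) :=
    fun q _ q' _ h => (List.append_inj' h rfl).1
  rw [← Set.ncard_inter_add_ncard_sdiff_eq_ncard _ {p | EndsRising p}
      (finite_endingAt_boundedLists h00 _),
    endingAt_diff_endsRising h00 hhoriz hx hm, hinj.ncard_image]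

lemma endingAt_boundedLists_zero (h00 : (0, 0) ∉ S) (h0 : 0 < s 0) :
    endingAt (boundedLists s S) (0, 0) = {[]} := by
  ext p
  refine ⟨fun ⟨⟨hS, _⟩, hsum⟩ => ?_, ?_⟩
  · have := length_le_sum_fst_add_sum_snd fun h => h00 (hS _ h)
    rw [hsum] at this
    exact List.eq_nil_of_length_eq_zero (Nat.le_zero.1 this)
  · rintro rfl
    exact ⟨⟨by simp [stepLists], hasBoundary_nil.2 h0⟩, rfl⟩

lemma two_mul_ncard_endingAt_sub_ncard_endsRising (h00 : (0, 0) ∉ S)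
    (hhoriz : ∀ a : ℕ, 1 ≤ a → (a, 0) ∈ S) (hmono : Monotone s) (hs0 : s 0 = 1) (m : ℕ) :
    2 * ((endingAt (boundedLists s S) (s m - 1, m)).ncard : ℤ) -
        (endingAt (boundedLists s S) (s m - 1, m) ∩ {p | EndsRising p}).ncard =
      (endingBefore (boundedLists s S) (s m) m).ncard + if m = 0 then 1 else 0 := by
  rcases Nat.eq_zero_or_pos m with rfl | hm
  · have hnil := endingAt_boundedLists_zero (s := s) h00 (by omega)
    have hrising : ({[]} ∩ {p | EndsRising p} : Set (List (ℕ × ℕ))) = ∅ := by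
      simp [EndsRising]
    simp [hs0, hnil, hrising, ncard_endingBefore (finite_endingAt_boundedLists h00)]
  · obtain ⟨k, hk⟩ : ∃ k, s m = k + 1 := ⟨s m - 1, by have := hmono (Nat.zero_le m); omega⟩
    have := ncard_endingAt_boundedLists (s := s) h00 hhoriz (x := k) (by omega) hm
    rw [hk, Nat.add_sub_cancel, ncard_endingBefore_succ (finite_endingAt_boundedLists h00),
      if_neg hm.ne']
    omega

end Paths

theorem stmt1_general (s : ℕ → ℕ) (hmono : Monotone s) (hs0 : s 0 = 1)
    (S : Set (ℕ × ℕ)) (h00 : (0, 0) ∉ S)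
    (hhoriz : ∀ a : ℕ, 1 ≤ a → (a, 0) ∈ S)
    (hslope : ∀ a b : ℕ, (a, b) ∈ S → 0 < b →
      ∀ i j : ℕ, 1 ≤ j → j ≤ b → j * a < b * (s (i + j) - s i + 1))
    (pB d : ℕ → ℕ)
    (hp : ∀ m, pB m =
      Set.ncard {p : List (ℕ × ℕ) | IsPath S (s m - 1) m p ∧ HasBoundary s p})
    (hd : ∀ m, d m =
      Set.ncard {p : List (ℕ × ℕ) | IsPath S (s m - 1) m p ∧ HasBoundary s p ∧
        ∃ st : ℕ × ℕ, p.getLast? = some st ∧ 0 < st.2})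
    (n : ℕ) :
    (∑ j ∈ Finset.range (s n), (aCount S j n : ℤ)) =
      (pB n : ℤ) + ∑ m ∈ Finset.range n,
        (2 * (pB m : ℤ) - (d m : ℤ)) *
          ∑ j ∈ Finset.range (s n - s m), (aCount S j (n - m) : ℤ) := by
  have hsn : 1 ≤ s n := hs0 ▸ hmono (Nat.zero_le n)
  set X : ℕ → ℤ := fun m => ∑ j ∈ Finset.range (s n - s m), (aCount S j (n - m) : ℤ)
  set g : ℕ → ℤ := fun m => (endingBefore (boundedLists s S) (s m) m).ncard
  have hcoef : ∀ m, 2 * (pB m : ℤ) - d m = g m + if m = 0 then 1 else 0 := fun m => by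
    rw [hp, hd, setOf_isPath_hasBoundary_eq, setOf_isPath_hasBoundary_endsRising_eq]
    exact two_mul_ncard_endingAt_sub_ncard_endsRising h00 hhoriz hmono hs0 m
  have hlast : (aCount S (s n - 1) n : ℤ) = pB n + ∑ m ∈ Finset.range (n + 1), g m * X m := by
    rw [aCount, setOf_isPath_eq, ncard_endingAt_stepLists h00 (by omega) hhoriz
      (risingStepsStayInside_of_slope hmono hslope), hp, setOf_isPath_hasBoundary_eq,
      Nat.sub_add_cancel hsn]
    simp only [X, g, ncard_endingBefore_stepLists h00]
    push_cast
    rfl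
  have hsplit : ∑ m ∈ Finset.range n, (2 * (pB m : ℤ) - d m) * X m =
      ∑ m ∈ Finset.range (n + 1), g m * X m + X 0 := by
    have hXn : X n = 0 := by simp [X]
    rw [← add_zero (∑ m ∈ Finset.range n, _), ← mul_zero (2 * (pB n : ℤ) - d n), ← hXn,
      ← Finset.sum_range_succ]
    simp only [hcoef, add_mul, ite_mul, one_mul, zero_mul, Finset.sum_add_distrib,
      Finset.sum_ite_eq', Finset.mem_range, Nat.zero_lt_succ, if_true]
  calc ∑ j ∈ Finset.range (s n), (aCount S j n : ℤ)
      = X 0 + aCount S (s n - 1) n := by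
        rw [← Nat.sub_add_cancel hsn, Finset.sum_range_succ, Nat.add_sub_cancel]
        simp [X, hs0]
    _ = _ := by rw [hlast, hsplit]; ring

theorem stmt1 (s : ℕ → ℕ) (hmono : Monotone s) (hpos : ∀ i, 0 < s i) (hs0 : s 0 = 1)
    (S : Set (ℕ × ℕ)) (h00 : (0, 0) ∉ S)
    (hhoriz : ∀ a : ℕ, 1 ≤ a → (a, 0) ∈ S)
    (hslope : ∀ a b : ℕ, (a, b) ∈ S → 0 < b →
      ∀ i j : ℕ, 1 ≤ j → j ≤ b → j * a < b * (s (i + j) - s i + 1))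
    (pB d : ℕ → ℕ)
    (hp : ∀ m, pB m =
      Set.ncard {p : List (ℕ × ℕ) | IsPath S (s m - 1) m p ∧ HasBoundary s p})
    (hd : ∀ m, d m =
      Set.ncard {p : List (ℕ × ℕ) | IsPath S (s m - 1) m p ∧ HasBoundary s p ∧
        ∃ st : ℕ × ℕ, p.getLast? = some st ∧ 0 < st.2})
    (n : ℕ) (hn : 1 ≤ n) :
    (∑ j ∈ Finset.range (s n), (aCount S j n : ℤ)) =
      (pB n : ℤ) + ∑ m ∈ Finset.range n,
        (2 * (pB m : ℤ) - (d m : ℤ)) *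
          ∑ j ∈ Finset.range (s n - s m), (aCount S j (n - m) : ℤ) :=
  stmt1_general s hmono hs0 S h00 hhoriz hslope pB d hp hd n
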